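/- The function S(x) = (1 − h((1+x)/2))/x is monotone increasing on the interval (0,1), and the function F(x) = (1 − h(x) − x)/x is convex on the interval (0,1), where h is the binary entropy function. -/

import Mathlib

/-!
Monotonicity of `S`: in nats, `1 - h((1 + x)/2)` is `g x / (2 log 2)` with
`g x = (1 + x) log (1 + x) + (1 - x) log (1 - x)`, a convex function vanishing at `0`, so
`S x = (g x - g 0) / (x - 0) / (2 log 2)` is a secant slope of a convex function from a fixed
point, hence monotone.

Convexity of `F`: `F' x = -(1 + log₂ (1 - x)) / x²` and
`F'' x = (x / (1 - x) + 2 log (2 (1 - x))) / (x³ log 2)`, whose numerator is at least `1` by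
`log t ≥ 1 - 1/t` at `t = 2 (1 - x)`.
-/

/-- The binary entropy function `h(p) = −p·log₂ p − (1−p)·log₂(1−p)`
(with the convention `log₂ 0 = 0`, so `h 0 = h 1 = 0`). -/
noncomputable def binEnt (p : ℝ) : ℝ :=
  -(p * Real.logb 2 p) - (1 - p) * Real.logb 2 (1 - p)

open Real Set

theorem half_mul_log_half (x : ℝ) : x / 2 * log (x / 2) = (x * log x - x * log 2) / 2 := by
  rcases eq_or_ne x 0 with rfl | hx
  · simp
  · rw [log_div hx two_ne_zero]
    ring

theorem one_sub_binEnt_one_add_div_two (x : ℝ) :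
    1 - binEnt ((1 + x) / 2) =
      ((1 + x) * log (1 + x) + (1 - x) * log (1 - x)) / (2 * log 2) := by
  have hlog2 : log 2 ≠ 0 := (log_pos one_lt_two).ne'
  have h1x : 1 - (1 + x) / 2 = (1 - x) / 2 := by ring
  simp only [binEnt, logb, h1x]
  rw [mul_div_assoc', mul_div_assoc', half_mul_log_half, half_mul_log_half]
  field_simp
  ring

theorem convexOn_mul_log_one_add_add_mul_log_one_sub :
    ConvexOn ℝ (Icc (-1) 1) fun x : ℝ => (1 + x) * log (1 + x) + (1 - x) * log (1 - x) := by
  have hadd (x : ℝ) : AffineMap.lineMap 1 2 x = 1 + x := by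
    rw [AffineMap.lineMap_apply_ring']; ring
  have hsub (x : ℝ) : AffineMap.lineMap 1 0 x = 1 - x := by
    rw [AffineMap.lineMap_apply_ring']; ring
  have h₁ := convexOn_mul_log.comp_affineMap (AffineMap.lineMap (1 : ℝ) 2)
  have h₂ := convexOn_mul_log.comp_affineMap (AffineMap.lineMap (1 : ℝ) 0)
  refine ((h₁.subset ?_ (convex_Icc _ _)).add (h₂.subset ?_ (convex_Icc _ _))).congr ?_
  · intro x hx
    simp only [mem_preimage, hadd, mem_Ici]
    linarith [hx.1]
  · intro x hx
    simp only [mem_preimage, hsub, mem_Ici]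
    linarith [hx.2]
  · intro x _
    simp only [Pi.add_apply, Function.comp_apply, hadd, hsub]

theorem monotoneOn_one_sub_binEnt_one_add_div_two_div :
    MonotoneOn (fun x : ℝ => (1 - binEnt ((1 + x) / 2)) / x) (Ioo 0 1) := by
  intro x hx y hy hxy
  have hconv := convexOn_mul_log_one_add_add_mul_log_one_sub.subset
    (Icc_subset_Icc (by norm_num) le_rfl) (convex_Icc 0 1)
  have hslope := hconv.secant_mono (left_mem_Icc.2 zero_le_one) (Ioo_subset_Icc_self hx)
    (Ioo_subset_Icc_self hy) hx.1.ne' hy.1.ne' hxy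
  simp only [add_zero, sub_zero, log_one, mul_zero] at hslope
  simp only [one_sub_binEnt_one_add_div_two, div_right_comm _ (2 * log 2)]
  exact div_le_div_of_nonneg_right hslope (by positivity)

theorem binEnt_eq_binEntropy_div_log_two (p : ℝ) : binEnt p = binEntropy p / log 2 := by
  simp only [binEnt, binEntropy, logb, log_inv]
  ring

theorem hasDerivAt_binEnt {p : ℝ} (hp₀ : p ≠ 0) (hp₁ : p ≠ 1) :
    HasDerivAt binEnt (logb 2 (1 - p) - logb 2 p) p := by
  rw [funext binEnt_eq_binEntropy_div_log_two, logb, logb, ← sub_div]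
  exact (hasDerivAt_binEntropy hp₀ hp₁).div_const _

theorem hasDerivAt_one_sub_binEnt_sub_div {x : ℝ} (hx₀ : x ≠ 0) (hx₁ : x ≠ 1) :
    HasDerivAt (fun x => (1 - binEnt x - x) / x) (-(1 + logb 2 (1 - x)) / x ^ 2) x := by
  have hnum := ((hasDerivAt_const x (1 : ℝ)).sub (hasDerivAt_binEnt hx₀ hx₁)).sub (hasDerivAt_id x)
  refine (hnum.div (hasDerivAt_id x) hx₀).congr_deriv ?_
  simp only [Pi.sub_apply, binEnt, id]
  field_simp
  ring

theorem hasDerivAt_neg_one_add_logb_one_sub_div_sq {x : ℝ} (hx₀ : x ≠ 0) (hx₁ : x ≠ 1) :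
    HasDerivAt (fun x => -(1 + logb 2 (1 - x)) / x ^ 2)
      ((x / (1 - x) + 2 * log (2 * (1 - x))) / (log 2 * x ^ 3)) x := by
  have h1x : 1 - x ≠ 0 := sub_ne_zero.mpr hx₁.symm
  have hlogb : HasDerivAt (fun x => logb 2 (1 - x)) (-1 / (1 - x) / log 2) x :=
    (((hasDerivAt_id x).const_sub 1).log h1x).div_const _
  refine (((hlogb.const_add 1).neg).div (hasDerivAt_pow 2 x) (pow_ne_zero 2 hx₀)).congr_deriv ?_
  simp only [Pi.neg_apply, logb, log_mul two_ne_zero h1x]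
  field_simp
  ring

theorem one_le_div_one_sub_add_two_mul_log {x : ℝ} (hx : x < 1) :
    1 ≤ x / (1 - x) + 2 * log (2 * (1 - x)) := by
  have h1x : 0 < 1 - x := sub_pos.mpr hx
  have hlog := one_sub_inv_le_log_of_pos (mul_pos two_pos h1x)
  have : x / (1 - x) = 2 * (2 * (1 - x))⁻¹ - 1 := by field_simp; ring
  linarith

theorem convexOn_one_sub_binEnt_sub_div :
    ConvexOn ℝ (Ioo 0 1) fun x : ℝ => (1 - binEnt x - x) / x := by
  refine convexOn_of_hasDerivWithinAt2_nonneg (convex_Ioo 0 1)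
    (f' := fun x => -(1 + logb 2 (1 - x)) / x ^ 2)
    (f'' := fun x => (x / (1 - x) + 2 * log (2 * (1 - x))) / (log 2 * x ^ 3)) ?_ ?_ ?_ ?_
  · exact fun x hx => (hasDerivAt_one_sub_binEnt_sub_div hx.1.ne' hx.2.ne)
      |>.continuousAt.continuousWithinAt
  · rw [interior_Ioo]
    exact fun x hx => (hasDerivAt_one_sub_binEnt_sub_div hx.1.ne' hx.2.ne).hasDerivWithinAt
  · rw [interior_Ioo]
    exact fun x hx =>
      (hasDerivAt_neg_one_add_logb_one_sub_div_sq hx.1.ne' hx.2.ne).hasDerivWithinAt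
  · rw [interior_Ioo]
    intro x hx
    have hnum := one_le_div_one_sub_add_two_mul_log hx.2
    have hden : 0 < log 2 * x ^ 3 := mul_pos (log_pos one_lt_two) (pow_pos hx.1 3)
    exact div_nonneg (by linarith) hden.le

/-- `S(x) = (1 − h((1+x)/2))/x` is monotone increasing on `(0,1)`, and
`F(x) = (1 − h(x) − x)/x` is convex on `(0,1)`. -/
theorem S_monotone_and_F_convex :
    MonotoneOn (fun x : ℝ => (1 - binEnt ((1 + x) / 2)) / x) (Set.Ioo 0 1) ∧
    ConvexOn ℝ (Set.Ioo (0 : ℝ) 1) (fun x : ℝ => (1 - binEnt x - x) / x) :=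
  ⟨monotoneOn_one_sub_binEnt_one_add_div_two_div, convexOn_one_sub_binEnt_sub_div⟩
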